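/- Define h(n) = 0!·1!·⋯·(n-1)!. For m,n,b,c,d nonnegative integers with b+c+d = n-1, the quantity (1/4)m(m-1) + (1/4)n(3n+1) + (1/2)(m+c)(b+d) - (1/4)(m-n)(m-b+c-d) is a nonnegative integer, and 2 raised to this power times h(m+n+1)·h(n-b)·h(m-c)·h(n-d)/(h(m+b+1)·h(n+c+1)·h(m+d+1)) is a positive integer, provided b ≤ n, c ≤ m, d ≤ n. -/

import Mathlib

/-
With `x = n - b`, `y = m - c`, `z = n - d` (so `n = b + c + d + 1`), the ratio of hyperfactorials is
MacMahon's box number `h(x) h(y) h(z) h(x+y+z) / (h(x+y) h(x+z) h(y+z))`. It is an integer because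
the Vandermonde product of the integer sequence `0, …, y-1, y+z, …, x+y+z-1` equals
`h(x) h(y) h(z) h(x+y+z) / (h(x+z) h(y+z))`, and the Vandermonde determinant of any `N` integers is
divisible by `h(N) = 0! ⋯ (N-1)!`. The exponent of `2` becomes
`m (b+d) + c (2(b+d) + c + 2) + (b+d+2 choose 2)` after substituting `n = b + c + d + 1`.
-/

open Nat

/-- The hyperfactorial h(n) = 0!·1!·⋯·(n-1)!. -/
def hyp (n : ℕ) : ℕ := ∏ i ∈ Finset.range n, i !

lemma hyp_pos (n : ℕ) : 0 < hyp n := Finset.prod_pos fun i _ => factorial_pos i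

open Finset

lemma hyp_succ (n : ℕ) : hyp (n + 1) = hyp n * n ! := prod_range_succ _ _

lemma Fin.prod_prod_Ioi_eq_prod_range_prod_range {M : Type*} [CommMonoid M] (N : ℕ)
    (f : ℕ → ℕ → M) :
    ∏ i : Fin N, ∏ j ∈ Ioi i, f i j = ∏ j ∈ range N, ∏ i ∈ range j, f i j := by
  rw [prod_comm' (t' := univ) (s' := fun j => Iio j) (by simp),
    prod_range fun j => ∏ i ∈ range j, f i j]
  refine prod_congr rfl fun j _ => ?_
  rw [← Nat.Iio_eq_range, ← Fin.map_valEmbedding_Iio, prod_map]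
  rfl

def vandermondeProd (w : ℕ → ℕ) (N : ℕ) : ℕ := ∏ j ∈ range N, ∏ i ∈ range j, (w j - w i)

lemma vandermondeProd_succ (w : ℕ → ℕ) (N : ℕ) :
    vandermondeProd w (N + 1) = vandermondeProd w N * ∏ i ∈ range N, (w N - w i) :=
  prod_range_succ _ _

lemma cast_vandermondeProd {w : ℕ → ℕ} (hw : Monotone w) (N : ℕ) :
    (vandermondeProd w N : ℤ) = ∏ j ∈ range N, ∏ i ∈ range j, ((w j : ℤ) - w i) := by
  push_cast [vandermondeProd]
  exact prod_congr rfl fun j _ => prod_congr rfl fun i hi =>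
    Nat.cast_sub (hw (mem_range.1 hi).le)

lemma hyp_dvd_vandermondeProd {w : ℕ → ℕ} (hw : Monotone w) (N : ℕ) :
    hyp N ∣ vandermondeProd w N := by
  cases N with
  | zero => simp [hyp]
  | succ N =>
    have h := Matrix.superFactorial_dvd_vandermonde_det fun i : Fin (N + 1) => (w i : ℤ)
    rw [Matrix.det_vandermonde, Fin.prod_prod_Ioi_eq_prod_range_prod_range (N + 1)
      fun i j => (w j : ℤ) - w i, ← cast_vandermondeProd hw] at h
    rw [hyp, prod_range_succ_factorial]
    exact_mod_cast h

lemma vandermondeProd_id (N : ℕ) : vandermondeProd id N = hyp N := by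
  induction N with
  | zero => rfl
  | succ N ih =>
    rw [vandermondeProd_succ, ih, hyp_succ, ← descFactorial_self, descFactorial_eq_prod_range]
    rfl

def gapSeq (y z t : ℕ) : ℕ := if t < y then t else t + z

lemma gapSeq_monotone (y z : ℕ) : Monotone (gapSeq y z) := by
  intro i j hij
  unfold gapSeq
  split_ifs <;> omega

lemma prod_range_gapSeq_sub (x y z : ℕ) :
    ∏ i ∈ range (y + x), (gapSeq y z (y + x) - gapSeq y z i) =
      (x + y + z).descFactorial y * x ! := by
  rw [prod_range_add, descFactorial_eq_prod_range, ← descFactorial_self,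
    descFactorial_eq_prod_range]
  congr 1
  all_goals
    refine prod_congr rfl fun i hi => ?_
    simp only [mem_range] at hi
    simp only [gapSeq]
    split_ifs <;> omega

lemma vandermondeProd_gapSeq (x y z : ℕ) :
    vandermondeProd (gapSeq y z) (y + x) * (hyp (x + z) * hyp (y + z)) =
      hyp x * hyp y * hyp z * hyp (x + y + z) := by
  induction x with
  | zero =>
    have : vandermondeProd (gapSeq y z) y = vandermondeProd id y :=
      prod_congr rfl fun j hj => prod_congr rfl fun i hi => by
        simp [gapSeq, mem_range.1 hj, (mem_range.1 hi).trans (mem_range.1 hj)]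
    rw [add_zero, this, vandermondeProd_id, zero_add, zero_add, add_comm y z]
    simp only [hyp, range_zero, prod_empty]
    ring
  | succ x ih =>
    have hfact : (x + z)! * (x + y + z).descFactorial y = (x + y + z)! := by
      rw [← factorial_mul_descFactorial (show y ≤ x + y + z by omega)]
      congr 2; omega
    rw [← add_assoc, vandermondeProd_succ, prod_range_gapSeq_sub, add_right_comm x 1 z,
      add_right_comm x 1 y, add_right_comm (x + y) 1 z, hyp_succ, hyp_succ, hyp_succ, ← hfact]
    calc _ = vandermondeProd (gapSeq y z) (y + x) * (hyp (x + z) * hyp (y + z)) *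
          ((x + z)! * (x + y + z).descFactorial y * x !) := by ring
      _ = _ := by rw [ih]; ring

theorem macMahon_box_dvd (x y z : ℕ) :
    hyp (y + z) * hyp (x + z) * hyp (y + x) ∣ hyp (x + y + z) * hyp x * hyp y * hyp z := by
  obtain ⟨q, hq⟩ := hyp_dvd_vandermondeProd (gapSeq_monotone y z) (y + x)
  refine ⟨q, ?_⟩
  calc _ = vandermondeProd (gapSeq y z) (y + x) * (hyp (x + z) * hyp (y + z)) := by
        rw [vandermondeProd_gapSeq]; ring
    _ = _ := by rw [hq]; ring

theorem stmt_8_general (m n b c d : ℕ)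
    (hbal : (b : ℤ) + c + d = (n : ℤ) - 1)
    (hcm : c ≤ m) :
    ∃ E : ℕ, (E : ℚ) =
        (m * (m - 1 : ℚ)) / 4 + (n * (3 * n + 1)) / 4
          + ((m + c) * (b + d)) / 2
          - ((m : ℚ) - n) * ((m : ℚ) - b + c - d) / 4 ∧
      ∃ N : ℕ, 0 < N ∧ (N : ℚ) =
        2 ^ E * (hyp (m + n + 1) * hyp (n - b) * hyp (m - c) * hyp (n - d)) /
          (hyp (m + b + 1) * hyp (n + c + 1) * hyp (m + d + 1)) := by
  obtain rfl : n = b + c + d + 1 := by omega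
  set E := m * (b + d) + c * (2 * (b + d) + c + 2) + (b + d + 2).choose 2
  refine ⟨E, by push_cast [E, cast_choose_two]; ring, ?_⟩
  obtain ⟨y, rfl⟩ := exists_add_of_le hcm
  have hbox := macMahon_box_dvd (c + d + 1) y (b + c + 1)
  have hden : 0 < hyp (y + (b + c + 1)) * hyp (c + d + 1 + (b + c + 1)) * hyp (y + (c + d + 1)) :=
    mul_pos (mul_pos (hyp_pos _) (hyp_pos _)) (hyp_pos _)
  rw [show c + y + (b + c + d + 1) + 1 = c + d + 1 + y + (b + c + 1) by ring,
    show b + c + d + 1 - b = c + d + 1 by omega, show c + y - c = y by omega,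
    show b + c + d + 1 - d = b + c + 1 by omega, show c + y + b + 1 = y + (b + c + 1) by ring,
    show b + c + d + 1 + c + 1 = c + d + 1 + (b + c + 1) by ring,
    show c + y + d + 1 = y + (c + d + 1) by ring]
  have hnum : 0 < hyp (c + d + 1 + y + (b + c + 1)) * hyp (c + d + 1) * hyp y * hyp (b + c + 1) :=
    mul_pos (mul_pos (mul_pos (hyp_pos _) (hyp_pos _)) (hyp_pos _)) (hyp_pos _)
  refine ⟨2 ^ E * (_ / _), mul_pos (by positivity) (Nat.div_pos (Nat.le_of_dvd hnum hbox) hden), ?_⟩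
  rw [Nat.cast_mul, Nat.cast_div hbox (by exact_mod_cast hden.ne'), mul_div_assoc]
  push_cast
  rfl

/-- Corollary 3.2: the exponent of 2 in the T-region formula is a nonnegative integer,
and the full formula is a positive integer. -/
theorem stmt_8 (m n b c d : ℕ)
    (hbal : (b : ℤ) + c + d = (n : ℤ) - 1)
    (hbn : b ≤ n) (hcm : c ≤ m) (hdn : d ≤ n) :
    ∃ E : ℕ, (E : ℚ) =
        (m * (m - 1 : ℚ)) / 4 + (n * (3 * n + 1)) / 4
          + ((m + c) * (b + d)) / 2
          - ((m : ℚ) - n) * ((m : ℚ) - b + c - d) / 4 ∧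
      ∃ N : ℕ, 0 < N ∧ (N : ℚ) =
        2 ^ E * (hyp (m + n + 1) * hyp (n - b) * hyp (m - c) * hyp (n - d)) /
          (hyp (m + b + 1) * hyp (n + c + 1) * hyp (m + d + 1)) :=
  stmt_8_general m n b c d hbal hcm
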